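/- Let Γ be a countable residually finite discrete group, f ∈ ℤΓ invertible in ℓ¹(Γ) with inverse w_f^Δ = f⁻¹, and ξ = η ∘ ρ_{w_f^Δ} : ℓ∞(Γ,ℤ) → X_f. Then for every subgroup Γ' ≤ Γ of finite index, Fix_{Γ'}(X_f) = ξ(ℓ∞(Γ,ℤ)^{Γ'}), and the kernel of the restriction of ξ to ℓ∞(Γ,ℤ)^{Γ'} is ρ_f(ℓ∞(Γ,ℤ)^{Γ'}); in particular Fix_{Γ'}(X_f) is isomorphic as a group to ℓ∞(Γ,ℤ)^{Γ'}/ρ_f(ℓ∞(Γ,ℤ)^{Γ'}). -/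

import Mathlib

open scoped BigOperators symmDiff Pointwise

noncomputable section

/-- The additive circle `𝕋 = ℝ/ℤ`. -/
abbrev Torus : Type := AddCircle (1 : ℝ)

section GroupDefs

variable {Γ : Type*} [Group Γ]

/-- For `f ∈ ℤΓ`, the map `ρ_f : 𝕋^Γ → 𝕋^Γ`, `(ρ_f x)_{γ'} = Σ_γ f_γ • x_{γ'γ}`. -/
def rhoT (f : Γ →₀ ℤ) (x : Γ → Torus) : Γ → Torus :=
  fun γ' => f.sum fun γ c => c • x (γ' * γ)

/-- The compact abelian group `X_f = ker ρ_f ⊆ 𝕋^Γ` (as a subset). -/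
def XSet (f : Γ →₀ ℤ) : Set (Γ → Torus) := {x | rhoT f x = 0}

/-- The left shift `(λ^γ x)_{γ'} = x_{γ⁻¹ γ'}` on `𝕋^Γ`; restricted to `X_f` this is `α_f^γ`. -/
def lsh (γ : Γ) (x : Γ → Torus) : Γ → Torus := fun γ' => x (γ⁻¹ * γ')

/-- The left shift `(λ^γ w)_{γ'} = w_{γ⁻¹ γ'}` on real-valued functions. -/
def lshR (γ : Γ) (w : Γ → ℝ) : Γ → ℝ := fun γ' => w (γ⁻¹ * γ')

/-- Expansiveness of the `Γ`-action `α_f` on `X_f`: there is an open neighbourhood `U`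
of `0` such that the only point of `X_f` all of whose translates stay in `U` is `0`
(equivalently, `⋂_γ α_f^γ (U ∩ X_f) = {0}`). -/
def ExpansiveAction (f : Γ →₀ ℤ) : Prop :=
  ∃ U : Set (Γ → Torus), IsOpen U ∧ {x | x ∈ XSet f ∧ ∀ γ : Γ, lsh γ x ∈ U} = {0}

/-- `w ∈ ℓ∞(Γ)`: boundedness of a real-valued function. -/
def Bdd (w : Γ → ℝ) : Prop := ∃ C : ℝ, ∀ γ : Γ, |w γ| ≤ C

/-- `w ∈ ℓ∞(Γ,ℤ)`: all values are integers. -/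
def IntValued (w : Γ → ℝ) : Prop := ∀ γ : Γ, ∃ k : ℤ, w γ = (k : ℝ)

/-- For `f ∈ ℤΓ`, the operator `ρ_f` on `ℓ∞(Γ)`: `(ρ_f w)_γ = Σ_{γ'} w_{γγ'} f_{γ'}`. -/
def rhoInf (f : Γ →₀ ℤ) (w : Γ → ℝ) : Γ → ℝ :=
  fun γ => f.sum fun γ' c => (c : ℝ) * w (γ * γ')

/-- For `h ∈ ℓ¹(Γ)`, the operator `ρ_h` on `ℓ∞(Γ)`: `(ρ_h w)_γ = Σ_{γ'} w_{γγ'} h_{γ'}`. -/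
def rhoL1 (h : Γ → ℝ) (w : Γ → ℝ) : Γ → ℝ :=
  fun γ => ∑' γ' : Γ, w (γ * γ') * h γ'

/-- Convolution on `ℓ¹(Γ)`: `(g·h)_γ = Σ_{γ'} g_{γ'} h_{γ'⁻¹γ}`. -/
def conv (g h : Γ → ℝ) : Γ → ℝ := fun γ => ∑' γ' : Γ, g γ' * h (γ'⁻¹ * γ)

/-- Convolution on `ℓ¹(Γ,ℂ)`. -/
def convC (g h : Γ → ℂ) : Γ → ℂ := fun γ => ∑' γ' : Γ, g γ' * h (γ'⁻¹ * γ)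

open Classical in
/-- The unit `δ₁` of the convolution algebra `ℓ¹(Γ)`. -/
def deltaOne : Γ → ℝ := fun γ => if γ = 1 then 1 else 0

open Classical in
/-- The unit `δ₁` of `ℓ¹(Γ,ℂ)`. -/
def deltaOneC : Γ → ℂ := fun γ => if γ = 1 then 1 else 0

/-- `g` is a two-sided convolution inverse of `f` in `ℓ¹(Γ)`. -/
def IsL1Inverse (f g : Γ → ℝ) : Prop :=
  Summable g ∧ conv f g = deltaOne ∧ conv g f = deltaOne

/-- View `f ∈ ℤΓ` as an element of `ℓ¹(Γ)`. -/
def fR (f : Γ →₀ ℤ) : Γ → ℝ := fun γ => (f γ : ℝ)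

/-- View `f ∈ ℤΓ` as an element of `ℓ¹(Γ,ℂ)`. -/
def fCC (f : Γ →₀ ℤ) : Γ → ℂ := fun γ => (f γ : ℂ)

/-- The `ℓ¹`-norm `‖f‖₁` of `f ∈ ℤΓ`. -/
def finsuppL1 (f : Γ →₀ ℤ) : ℝ := f.sum fun _ c => |(c : ℝ)|

/-- The `ℓ¹`-norm of `h ∈ ℓ¹(Γ,ℂ)`. -/
def l1normC (h : Γ → ℂ) : ℝ := ∑' γ : Γ, ‖h γ‖

/-- Coordinatewise reduction mod 1, `η : ℓ∞(Γ) → 𝕋^Γ`. -/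
def etaT (w : Γ → ℝ) : Γ → Torus := fun γ => ((w γ : ℝ) : Torus)

/-- The map `ξ = η ∘ ρ_{w}` for `w ∈ ℓ¹(Γ)`. -/
def xiMap (w : Γ → ℝ) (v : Γ → ℝ) : Γ → Torus := etaT (rhoL1 w v)

/-- A point `x ∈ 𝕋^Γ` is homoclinic if `λ^γ x → 0` along the cofinite filter on `Γ`. -/
def IsHomoclinic (x : Γ → Torus) : Prop :=
  Filter.Tendsto (fun γ : Γ => lsh γ x) Filter.cofinite (nhds 0)

/-- The set of `Γ'`-fixed points of `α_f` in `X_f`. -/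
def FixSet (f : Γ →₀ ℤ) (Γ' : Subgroup Γ) : Set (Γ → Torus) :=
  {x | x ∈ XSet f ∧ ∀ γ ∈ Γ', lsh γ x = x}

/-- Left `(K,ε)`-invariance of a finite set `Q ⊆ Γ`. -/
def LeftInv [DecidableEq Γ] (K : Finset Γ) (ε : ℝ) (Q : Finset Γ) : Prop :=
  ∑ γ ∈ K, (((Q.image fun q => γ * q) ∆ Q).card : ℝ) / (Q.card : ℝ) < ε

/-- Right `(K,ε)`-invariance of a finite set `Q ⊆ Γ`. -/
def RightInv [DecidableEq Γ] (K : Finset Γ) (ε : ℝ) (Q : Finset Γ) : Prop :=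
  ∑ γ ∈ K, (((Q.image fun q => q * γ) ∆ Q).card : ℝ) / (Q.card : ℝ) < ε

/-- Amenability: existence of a left Følner sequence. -/
def Amenable (Γ : Type*) [Group Γ] [DecidableEq Γ] : Prop :=
  ∃ Q : ℕ → Finset Γ, (∀ n, (Q n).Nonempty) ∧
    ∀ (K : Finset Γ) (ε : ℝ), 0 < ε → ∃ N : ℕ, ∀ n ≥ N, LeftInv K ε (Q n)

/-- Residual finiteness: there is a sequence of finite-index normal subgroups with
trivial intersection. -/
def ResFinite (Γ : Type*) [Group Γ] : Prop :=
  ∃ N : ℕ → Subgroup Γ, (∀ n, (N n).Normal ∧ (N n).FiniteIndex) ∧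
    ∀ γ : Γ, (∀ n, γ ∈ N n) → γ = 1

/-- `Q` is a fundamental domain for the coset space `Γ/Γ'`:
`{γQ : γ ∈ Γ'}` is a partition of `Γ`. -/
def IsFundDomain (Γ' : Subgroup Γ) (Q : Finset Γ) : Prop :=
  ∀ x : Γ, ∃! p : Γ × Γ, p.1 ∈ Γ' ∧ p.2 ∈ Q ∧ p.1 * p.2 = x

/-- `lim_n Γ_n = {1}`: for every finite `K ⊆ Γ` eventually `Γ_n ∩ K⁻¹K = {1}`. -/
def LimTriv (N : ℕ → Subgroup Γ) : Prop :=
  ∀ K : Finset Γ, ∃ M : ℕ, ∀ n ≥ M, ∀ γ ∈ N n, (∃ a ∈ K, ∃ b ∈ K, γ = a⁻¹ * b) → γ = 1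

/-- The word ball `B_F(n)` of radius `n` with respect to a generating set `F`. -/
def BallF (F : Finset Γ) (n : ℕ) : Set Γ :=
  {γ | ∃ l : List Γ, l.length ≤ n ∧ (∀ a ∈ l, a ∈ F) ∧ l.prod = γ}

end GroupDefs

/-- The Hilbert space `ℓ²(Γ,ℂ)`. -/
abbrev H2 (Γ : Type*) : Type _ := lp (fun _ : Γ => ℂ) 2

section Hilbert

variable {Γ : Type*} [Group Γ]

open Classical in
/-- The standard basis vector `δ₁ ∈ ℓ²(Γ,ℂ)`. -/
def deltaL2 : H2 Γ := lp.single 2 (1 : Γ) (1 : ℂ)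

/-- `A` is the right-convolution operator `ρ_f` on `ℓ²(Γ,ℂ)`,
`(ρ_f w)_γ = Σ_{γ'} w_{γγ'} f_{γ'}`. -/
def IsRho (f : Γ → ℂ) (A : H2 Γ →L[ℂ] H2 Γ) : Prop :=
  ∀ (w : H2 Γ) (γ : Γ), (A w : Γ → ℂ) γ = ∑' γ' : Γ, (w : Γ → ℂ) (γ * γ') * f γ'

/-- The von Neumann trace of `log (A A*)`, i.e. `tr_{NΓ}(log (A A*)) = (log(AA*) δ₁)(1)`,
where `log` is given by the continuous functional calculus. -/
def trLogAAstar (A : H2 Γ →L[ℂ] H2 Γ) : ℝ :=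
  letI : Algebra ℝ (H2 Γ →L[ℂ] H2 Γ) := Algebra.complexToReal
  (((cfc Real.log (A * star A)) deltaL2 : Γ → ℂ) (1 : Γ)).re

/-- The Fuglede–Kadison determinant `det_{NΓ} A = exp(½ tr(log (A A*)))`. -/
def detFK (A : H2 Γ →L[ℂ] H2 Γ) : ℝ := Real.exp (2⁻¹ * trLogAAstar A)

open Classical in
/-- `f^{(n)} : Γ/Γ_n → ℂ`, integration along the fibres: `f^{(n)}(δ) = Σ_{γ ∈ δ} f_γ`. -/
def fQuot (f : Γ → ℂ) (H : Subgroup Γ) : (Γ ⧸ H) → ℂ :=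
  fun δ => ∑' γ : Γ, if (QuotientGroup.mk γ : Γ ⧸ H) = δ then f γ else 0

open Classical in
/-- The indicator of the identity coset in `ℓ²(Γ/Γ_n, ℂ)`. -/
def deltaQuot (H : Subgroup Γ) : (Γ ⧸ H) → ℂ :=
  fun δ => if δ = (QuotientGroup.mk (1 : Γ) : Γ ⧸ H) then 1 else 0

end Hilbert

/-!
The operators `ρ_h`, `h ∈ ℓ¹(Γ)`, on `ℓ∞(Γ)` satisfy `ρ_h ∘ ρ_g = ρ_{h·g}` (Fubini), so `ρ_f` and `ρ_w`
are mutually inverse on `ℓ∞(Γ)`; both commute with left shifts, and `η` intertwines `ρ_f` on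
`ℓ∞(Γ)` with `ρ_f` on `𝕋^Γ`. A `Γ'`-fixed point `x ∈ X_f` lifts coordinatewise through a fixed section
`𝕋 → [0,1)` to a bounded `Γ'`-invariant `y` with `η y = x`; then `v = ρ_f y` is integer valued
because `η (ρ_f y) = ρ_f x = 0`, and `ξ v = η y = x`. Conversely `ξ v = 0` says exactly that
`u = ρ_w v` is integer valued, and then `v = ρ_f u`.
-/

section Convolution

variable {Γ : Type*}

theorem summable_fR (f : Γ →₀ ℤ) : Summable (fR f) :=
  summable_of_ne_finset_zero (s := f.support) fun a ha => by
    simp [fR, Finsupp.notMem_support_iff.mp ha]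

variable [Group Γ]

open Function in
theorem rhoL1_rhoL1 {g h v : Γ → ℝ} (hg : Summable g) (hh : Summable h) (hv : Bdd v) :
    rhoL1 h (rhoL1 g v) = rhoL1 (conv h g) v := by
  obtain ⟨C, hC⟩ := hv
  funext γ
  set G : Γ → Γ → ℝ := fun a b => v (γ * (a * b)) * (h a * g b)
  set F : Γ → Γ → ℝ := fun a t => v (γ * t) * (h a * g (a⁻¹ * t))
  let e : Γ × Γ ≃ Γ × Γ := Equiv.prodShear (Equiv.refl Γ) Equiv.mulLeft
  have hFe : uncurry F ∘ e = uncurry G := by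
    funext ⟨a, b⟩
    simp [F, G, e]
  have hG : Summable (uncurry G) :=
    .of_norm_bounded ((hh.norm.mul_norm hg.norm).mul_left C) fun p => by
      simp only [uncurry, G, norm_mul]
      gcongr
      exact hC _
  have hF : Summable (uncurry F) := by
    rwa [← e.summable_iff, hFe]
  calc rhoL1 h (rhoL1 g v) γ = ∑' a, ∑' b, G a b := by
        refine tsum_congr fun a => ?_
        simp only [rhoL1, ← tsum_mul_right, G, mul_assoc]
        exact tsum_congr fun b => by ring
    _ = ∑' p, uncurry G p := hG.tsum_prod.symm
    _ = ∑' q, uncurry F q := by rw [← hFe]; exact e.tsum_eq (uncurry F)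
    _ = ∑' t, ∑' a, F a t := by rw [hF.tsum_comm]; exact hF.tsum_prod
    _ = rhoL1 (conv h g) v γ := by simp only [rhoL1, conv, F, tsum_mul_left]

theorem rhoL1_deltaOne (v : Γ → ℝ) : rhoL1 deltaOne v = v := by
  funext γ
  rw [rhoL1, tsum_eq_single 1 fun a ha => by simp [deltaOne, ha]]
  simp [deltaOne]

theorem rhoL1_lshR (h : Γ → ℝ) (γ : Γ) (v : Γ → ℝ) :
    rhoL1 h (lshR γ v) = lshR γ (rhoL1 h v) := by
  funext γ'
  simp only [rhoL1, lshR, mul_assoc]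

theorem bdd_rhoL1 {h v : Γ → ℝ} (hh : Summable h) (hv : Bdd v) : Bdd (rhoL1 h v) := by
  obtain ⟨C, hC⟩ := hv
  refine ⟨C * ∑' a, |h a|, fun γ => ?_⟩
  rw [← Real.norm_eq_abs]
  refine tsum_of_norm_bounded (hh.abs.hasSum.mul_left C) fun a => ?_
  rw [norm_mul, Real.norm_eq_abs, Real.norm_eq_abs]
  gcongr
  exact hC _

theorem rhoInf_eq_rhoL1 (f : Γ →₀ ℤ) : rhoInf f = rhoL1 (fR f) := by
  funext y γ
  rw [rhoL1, tsum_eq_sum (s := f.support) fun a ha => by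
    simp [fR, Finsupp.notMem_support_iff.mp ha]]
  exact Finset.sum_congr rfl fun a _ => mul_comm _ _

theorem IsL1Inverse.rhoInf_rhoL1 {f : Γ →₀ ℤ} {w : Γ → ℝ} (hw : IsL1Inverse (fR f) w)
    {v : Γ → ℝ} (hv : Bdd v) : rhoInf f (rhoL1 w v) = v := by
  rw [rhoInf_eq_rhoL1, rhoL1_rhoL1 hw.1 (summable_fR f) hv, hw.2.1, rhoL1_deltaOne]

theorem IsL1Inverse.rhoL1_rhoInf {f : Γ →₀ ℤ} {w : Γ → ℝ} (hw : IsL1Inverse (fR f) w)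
    {u : Γ → ℝ} (hu : Bdd u) : rhoL1 w (rhoInf f u) = u := by
  rw [rhoInf_eq_rhoL1, rhoL1_rhoL1 (summable_fR f) hw.1 hu, hw.2.2, rhoL1_deltaOne]

end Convolution

section Torus

def torusLift (t : Torus) : ℝ := AddCircle.equivIco (1 : ℝ) 0 t

theorem coe_torusLift (t : Torus) : ((torusLift t : ℝ) : Torus) = t :=
  (AddCircle.equivIco (1 : ℝ) 0).symm_apply_apply t

theorem abs_torusLift_le (t : Torus) : |torusLift t| ≤ 1 := by
  obtain ⟨h0, h1⟩ := (AddCircle.equivIco (1 : ℝ) 0 t).2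
  exact abs_le.mpr ⟨by unfold torusLift; linarith, by unfold torusLift; linarith⟩

variable {Γ : Type*}

theorem etaT_eq_zero_iff {y : Γ → ℝ} : etaT y = 0 ↔ IntValued y := by
  simp only [funext_iff, etaT, Pi.zero_apply, AddCircle.coe_eq_zero_iff, IntValued, zsmul_one]
  exact forall_congr' fun γ => exists_congr fun k => eq_comm

variable [Group Γ]

theorem rhoT_etaT (f : Γ →₀ ℤ) (y : Γ → ℝ) : rhoT f (etaT y) = etaT (rhoInf f y) := by
  funext γ
  simp only [rhoT, etaT, rhoInf, Finsupp.sum, ← zsmul_eq_mul]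
  exact (map_sum (QuotientAddGroup.mk' (AddSubgroup.zmultiples (1 : ℝ))) _ _).symm

theorem lsh_etaT (γ : Γ) (y : Γ → ℝ) : lsh γ (etaT y) = etaT (lshR γ y) := rfl

end Torus

section FixedPoints

variable {Γ : Type*} [Group Γ]

/-- Membership in `ℓ∞(Γ,ℤ)^{Γ'}`. -/
def IsFixedBddInt (Γ' : Subgroup Γ) (v : Γ → ℝ) : Prop :=
  Bdd v ∧ IntValued v ∧ ∀ γ ∈ Γ', lshR γ v = v

variable {f : Γ →₀ ℤ} {w : Γ → ℝ}

theorem IsL1Inverse.fixSet_eq (hw : IsL1Inverse (fR f) w) (Γ' : Subgroup Γ) :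
    FixSet f Γ' = {x | ∃ v, IsFixedBddInt Γ' v ∧ xiMap w v = x} := by
  ext x
  constructor
  · rintro ⟨hx, hfix⟩
    set y : Γ → ℝ := fun γ => torusLift (x γ)
    have hy : Bdd y := ⟨1, fun γ => abs_torusLift_le _⟩
    have hyx : etaT y = x := funext fun γ => coe_torusLift _
    refine ⟨rhoInf f y, ⟨?_, ?_, fun γ hγ => ?_⟩, ?_⟩
    · rw [rhoInf_eq_rhoL1]
      exact bdd_rhoL1 (summable_fR f) hy
    · rw [← etaT_eq_zero_iff, ← rhoT_etaT, hyx]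
      exact hx
    · have hyγ : lshR γ y = y := funext fun γ' => congrArg torusLift (congrFun (hfix γ hγ) γ')
      rw [rhoInf_eq_rhoL1, ← rhoL1_lshR, hyγ]
    · rw [xiMap, hw.rhoL1_rhoInf hy, hyx]
  · rintro ⟨v, ⟨hvb, hvi, hvfix⟩, rfl⟩
    refine ⟨?_, fun γ hγ => ?_⟩
    · change rhoT f (etaT _) = 0
      rw [rhoT_etaT, hw.rhoInf_rhoL1 hvb]
      exact etaT_eq_zero_iff.mpr hvi
    · rw [xiMap, lsh_etaT, ← rhoL1_lshR, hvfix γ hγ]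

theorem IsL1Inverse.xiMap_eq_zero_iff (hw : IsL1Inverse (fR f) w) {Γ' : Subgroup Γ}
    {v : Γ → ℝ} (hvb : Bdd v) (hvfix : ∀ γ ∈ Γ', lshR γ v = v) :
    xiMap w v = 0 ↔ ∃ u, IsFixedBddInt Γ' u ∧ rhoInf f u = v := by
  constructor
  · intro h0
    refine ⟨rhoL1 w v, ⟨bdd_rhoL1 hw.1 hvb, etaT_eq_zero_iff.mp h0, fun γ hγ => ?_⟩,
      hw.rhoInf_rhoL1 hvb⟩
    rw [← rhoL1_lshR, hvfix γ hγ]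
  · rintro ⟨u, ⟨hub, hui, -⟩, rfl⟩
    rw [xiMap, hw.rhoL1_rhoInf hub]
    exact etaT_eq_zero_iff.mpr hui

end FixedPoints

theorem statement9_general {Γ : Type*} [Group Γ]
    (f : Γ →₀ ℤ) (w : Γ → ℝ) (hw : IsL1Inverse (fR f) w)
    (Γ' : Subgroup Γ) :
    FixSet f Γ' = {x | ∃ v : Γ → ℝ,
        (Bdd v ∧ IntValued v ∧ ∀ γ ∈ Γ', lshR γ v = v) ∧ xiMap w v = x} ∧
    ∀ v : Γ → ℝ, Bdd v → IntValued v → (∀ γ ∈ Γ', lshR γ v = v) →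
      (xiMap w v = 0 ↔ ∃ u : Γ → ℝ,
        (Bdd u ∧ IntValued u ∧ ∀ γ ∈ Γ', lshR γ u = u) ∧ rhoInf f u = v) :=
  ⟨hw.fixSet_eq Γ', fun _ hvb _ hvfix => hw.xiMap_eq_zero_iff hvb hvfix⟩

/-- Let `Γ` be a countable residually finite discrete group, `f ∈ ℤΓ`
invertible in `ℓ¹(Γ)` with inverse `w = w_f^Δ`, and `ξ = η ∘ ρ_w`. For every
finite-index subgroup `Γ' ≤ Γ`, `Fix_{Γ'}(X_f) = ξ(ℓ∞(Γ,ℤ)^{Γ'})`, and the kernel of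
`ξ` restricted to `ℓ∞(Γ,ℤ)^{Γ'}` is `ρ_f(ℓ∞(Γ,ℤ)^{Γ'})` (so that `Fix_{Γ'}(X_f)` is
isomorphic to `ℓ∞(Γ,ℤ)^{Γ'}/ρ_f(ℓ∞(Γ,ℤ)^{Γ'})`). -/
theorem statement9 {Γ : Type*} [Group Γ] [Countable Γ] (hRF : ResFinite Γ)
    (f : Γ →₀ ℤ) (w : Γ → ℝ) (hw : IsL1Inverse (fR f) w)
    (Γ' : Subgroup Γ) (hΓ' : Γ'.FiniteIndex) :
    FixSet f Γ' = {x | ∃ v : Γ → ℝ,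
        (Bdd v ∧ IntValued v ∧ ∀ γ ∈ Γ', lshR γ v = v) ∧ xiMap w v = x} ∧
    ∀ v : Γ → ℝ, Bdd v → IntValued v → (∀ γ ∈ Γ', lshR γ v = v) →
      (xiMap w v = 0 ↔ ∃ u : Γ → ℝ,
        (Bdd u ∧ IntValued u ∧ ∀ γ ∈ Γ', lshR γ u = u) ∧ rhoInf f u = v) :=
  statement9_general f w hw Γ'

end
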